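/- Define nine points A_0,A_1,A_2,B_0,B_1,B_2,C_0,C_1,C_2 with distances (subscripts mod 3): within each triple {A_i}, {B_i}, {C_i} all distances equal 1; d(A_i,B_i) = d(B_i,C_i) = d(C_i,A_i) = δ_2; d(A_i,B_{i+1}) = d(B_i,C_{i+1}) = d(C_i,A_{i+1}) = δ_3; d(A_i,B_{i+2}) = d(B_i,C_{i+2}) = d(C_i,A_{i+2}) = δ_4, where δ_j = sin(jπ/9)/sin(π/9). Then this defines a metric space (all triangle inequalities hold), it is quasi-homogeneous of type [1,1,δ_2,δ_2,δ_3,δ_3,δ_4,δ_4], and it is not isometric to the set of vertices of the regular 9-gon with side length 1. -/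

import Mathlib

open Real

/-- The distinct vertex distances of the unit regular 9-gon: `δ_j = sin(jπ/9)/sin(π/9)`. -/
noncomputable def nonagonDelta (j : ℕ) : ℝ := Real.sin (j * π / 9) / Real.sin (π / 9)

/-- `|i|_m = min over integers l of |i - l·m|`. -/
noncomputable def circAbs (m : ℕ) (i : ℤ) : ℤ :=
  sInf {a : ℤ | ∃ l : ℤ, a = |i - l * (m : ℤ)|}

/-! The nine points form three unit equilateral triangles `{A_i}`, `{B_i}`, `{C_i}`, and every
distance between different triangles lies in `[δ₂, δ₄]`.  Since `δ₄ = 1 + δ₂` (equivalently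
`sin 4x - sin 2x = 2 cos 3x sin x = sin x` at `x = π/9`) and `δ₂ ≥ 1`, every triangle inequality
follows from this block structure alone.  Writing `d(x, y) = δ_k` with an explicit index
`k(x, y) ∈ {0, …, 4}`, symmetry, positivity and the type are finite checks on `k`.  Finally the regular 9-gon
contains no equilateral triangle of side 1: the differences of its vertices would be `±1 mod 9`
and add up, which is impossible since a sum of two signs is never `±1`. -/

lemma sin_pi_div_nine_pos : 0 < sin (π / 9) :=
  sin_pos_of_pos_of_lt_pi (by positivity) (by linarith [pi_pos])

lemma nonagonDelta_zero : nonagonDelta 0 = 0 := by simp [nonagonDelta]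

lemma nonagonDelta_one : nonagonDelta 1 = 1 := by
  simpa [nonagonDelta] using div_self sin_pi_div_nine_pos.ne'

lemma nonagonDelta_strictMonoOn : StrictMonoOn nonagonDelta (Set.Iic 4) := by
  intro j hj k hk hjk
  have hj' : (j : ℝ) ≤ 4 := by exact_mod_cast hj
  have hk' : (k : ℝ) ≤ 4 := by exact_mod_cast hk
  have hjk' : (j : ℝ) < k := by exact_mod_cast hjk
  have hj0 : (0 : ℝ) ≤ j := j.cast_nonneg
  refine div_lt_div_of_pos_right (strictMonoOn_sin ?_ ?_ ?_) sin_pi_div_nine_pos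
  · constructor <;> nlinarith [pi_pos]
  · constructor <;> nlinarith [pi_pos]
  · exact div_lt_div_of_pos_right (mul_lt_mul_of_pos_right hjk' pi_pos) (by norm_num)

lemma nonagonDelta_four : nonagonDelta 4 = 1 + nonagonDelta 2 := by
  have hsin : sin (4 * π / 9) = sin (π / 9) + sin (2 * π / 9) := by
    rw [← sub_eq_iff_eq_add, sin_sub_sin, show (4 * π / 9 - 2 * π / 9) / 2 = π / 9 by ring,
      show (4 * π / 9 + 2 * π / 9) / 2 = π / 3 by ring, cos_pi_div_three]
    ring
  simp only [nonagonDelta, Nat.cast_ofNat]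
  rw [hsin, add_div, div_self sin_pi_div_nine_pos.ne']

lemma one_le_nonagonDelta_two : 1 ≤ nonagonDelta 2 := by
  rw [← nonagonDelta_one]
  exact (nonagonDelta_strictMonoOn (by simp) (by simp) one_lt_two).le

lemma bddBelow_circAbs_set (m : ℕ) (i : ℤ) :
    BddBelow {a : ℤ | ∃ l : ℤ, a = |i - l * (m : ℤ)|} :=
  ⟨0, by rintro _ ⟨l, rfl⟩; exact abs_nonneg _⟩

lemma circAbs_le (m : ℕ) (i l : ℤ) : circAbs m i ≤ |i - l * m| :=
  csInf_le (bddBelow_circAbs_set m i) ⟨l, rfl⟩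

lemma exists_circAbs_eq (m : ℕ) (i : ℤ) : ∃ l : ℤ, circAbs m i = |i - l * m| :=
  Int.csInf_mem (s := {a : ℤ | ∃ l : ℤ, a = |i - l * (m : ℤ)|}) ⟨|i|, 0, by simp⟩
    (bddBelow_circAbs_set m i)

lemma circAbs_nonneg (m : ℕ) (i : ℤ) : 0 ≤ circAbs m i := by
  obtain ⟨l, hl⟩ := exists_circAbs_eq m i
  exact hl ▸ abs_nonneg _

lemma two_mul_circAbs_le {m : ℕ} (hm : 0 < m) (i : ℤ) : 2 * circAbs m i ≤ m := by
  have hm' : (0 : ℤ) < m := by exact_mod_cast hm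
  have hdiv := Int.emod_add_mul_ediv i m
  have hlo := Int.emod_nonneg i hm'.ne'
  have hhi := Int.emod_lt_of_pos i hm'
  have h₁ := circAbs_le m i (i / m)
  have h₂ := circAbs_le m i (i / m + 1)
  rw [abs_of_nonneg (by linarith)] at h₁
  rw [abs_of_nonpos (by linarith)] at h₂
  linarith

lemma circAbs_nine_eq_one {i : ℤ} (h : nonagonDelta (circAbs 9 i).toNat = 1) :
    circAbs 9 i = 1 := by
  have hle : (circAbs 9 i).toNat ≤ 4 := by
    have := two_mul_circAbs_le (m := 9) (by norm_num) i
    omega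
  rw [← nonagonDelta_one] at h
  have htoNat := nonagonDelta_strictMonoOn.injOn hle (by simp : 1 ∈ Set.Iic 4) h
  have hnonneg := circAbs_nonneg 9 i
  omega

lemma exists_sub_mul_nine_eq_one_or_neg_one {i : ℤ}
    (h : nonagonDelta (circAbs 9 i).toNat = 1) : ∃ l : ℤ, i - l * 9 = 1 ∨ i - l * 9 = -1 := by
  obtain ⟨l, hl⟩ := exists_circAbs_eq 9 i
  rw [circAbs_nine_eq_one h, eq_comm, abs_eq zero_le_one] at hl
  exact ⟨l, by exact_mod_cast hl⟩

lemma nonagon_no_unit_triangle {a b c : ℤ} (hab : nonagonDelta (circAbs 9 (b - a)).toNat = 1)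
    (hbc : nonagonDelta (circAbs 9 (c - b)).toNat = 1) :
    nonagonDelta (circAbs 9 (c - a)).toNat ≠ 1 := by
  intro hac
  obtain ⟨l₁, h₁⟩ := exists_sub_mul_nine_eq_one_or_neg_one hab
  obtain ⟨l₂, h₂⟩ := exists_sub_mul_nine_eq_one_or_neg_one hbc
  obtain ⟨l₃, h₃⟩ := exists_sub_mul_nine_eq_one_or_neg_one hac
  omega

lemma triangle_of_blocks {α β : Type*} (f : α → β) {d : α → α → ℝ} {a : ℝ} (ha : 1 ≤ a)
    (hself : ∀ x, d x x = 0) (hsame : ∀ x y, x ≠ y → f x = f y → d x y = 1)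
    (hdiff : ∀ x y, f x ≠ f y → a ≤ d x y ∧ d x y ≤ 1 + a) (x y z : α) :
    d x z ≤ d x y + d y z := by
  have hlow : ∀ u v, u ≠ v → 1 ≤ d u v := fun u v huv => by
    by_cases h : f u = f v
    · exact (hsame u v huv h).ge
    · linarith [(hdiff u v h).1]
  have hnonneg : ∀ u v, 0 ≤ d u v := fun u v => by
    by_cases huv : u = v
    · rw [huv, hself]
    · linarith [hlow u v huv]
  rcases eq_or_ne x y with rfl | hxy
  · simp [hself]
  rcases eq_or_ne y z with rfl | hyz
  · simp [hself]
  by_cases hxz : f x = f z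
  · rcases eq_or_ne x z with rfl | hxz'
    · linarith [hself x, hnonneg x y, hnonneg y x]
    linarith [hsame x z hxz' hxz, hlow x y hxy, hnonneg y z]
  have hxz_le := (hdiff x z hxz).2
  by_cases hxy' : f x = f y
  · linarith [hsame x y hxy hxy', (hdiff y z fun h => hxz (hxy'.trans h)).1]
  by_cases hyz' : f y = f z
  · linarith [hsame y z hyz hyz', (hdiff x y hxy').1]
  linarith [(hdiff x y hxy').1, (hdiff y z hyz').1]

/-- The point `(letter, i)` is `A_i`, `B_i` or `C_i` as `letter` is `0`, `1` or `2`. -/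
def mutantIndex (x y : Fin 3 × Fin 3) : ℕ :=
  if x.1 = y.1 then (if x.2 = y.2 then 0 else 1)
  else if y.1 - x.1 = (1 : Fin 3) then 2 + ((y.2 - x.2 : Fin 3) : ℕ)
  else 2 + ((x.2 - y.2 : Fin 3) : ℕ)

noncomputable def mutantDist (x y : Fin 3 × Fin 3) : ℝ := nonagonDelta (mutantIndex x y)

lemma mutantDist_eq (x y : Fin 3 × Fin 3) : mutantDist x y =
    if x.1 = y.1 then (if x.2 = y.2 then 0 else 1)
    else if y.1 - x.1 = (1 : Fin 3) then nonagonDelta (2 + ((y.2 - x.2 : Fin 3) : ℕ))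
    else nonagonDelta (2 + ((x.2 - y.2 : Fin 3) : ℕ)) := by
  unfold mutantDist mutantIndex
  split_ifs <;> simp only [nonagonDelta_zero, nonagonDelta_one]

lemma mutantIndex_comm : ∀ x y, mutantIndex x y = mutantIndex y x := by decide

lemma mutantIndex_mem_Icc_of_ne : ∀ x y, x ≠ y → mutantIndex x y ∈ Finset.Icc 1 4 := by decide

lemma mutantIndex_eq_one : ∀ x y, x ≠ y → x.1 = y.1 → mutantIndex x y = 1 := by decide

lemma mutantIndex_mem_Icc_of_fst_ne : ∀ x y, x.1 ≠ y.1 → mutantIndex x y ∈ Finset.Icc 2 4 := by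
  decide

lemma map_mutantIndex_univ : ∀ x, (Finset.univ.val.map fun y => mutantIndex x y) =
    {0, 1, 1, 2, 2, 3, 3, 4, 4} := by
  decide

lemma mutantDist_comm (x y : Fin 3 × Fin 3) : mutantDist x y = mutantDist y x := by
  rw [mutantDist, mutantIndex_comm]; rfl

lemma mutantDist_pos {x y : Fin 3 × Fin 3} (h : x ≠ y) : 0 < mutantDist x y := by
  have hk := Finset.mem_Icc.1 (mutantIndex_mem_Icc_of_ne x y h)
  rw [mutantDist, ← nonagonDelta_zero]
  exact nonagonDelta_strictMonoOn (by simp) (Set.mem_Iic.2 hk.2) (by omega)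

lemma mutantDist_eq_one {x y : Fin 3 × Fin 3} (h : x ≠ y) (hfst : x.1 = y.1) :
    mutantDist x y = 1 := by
  rw [mutantDist, mutantIndex_eq_one x y h hfst, nonagonDelta_one]

lemma map_mutantDist_univ (x : Fin 3 × Fin 3) :
    (Finset.univ.val.map fun y => mutantDist x y) = (0 ::ₘ 1 ::ₘ 1 ::ₘ nonagonDelta 2 ::ₘ
      nonagonDelta 2 ::ₘ nonagonDelta 3 ::ₘ nonagonDelta 3 ::ₘ nonagonDelta 4 ::ₘ
      {nonagonDelta 4}) := by
  have hmap := congrArg (Multiset.map nonagonDelta) (map_mutantIndex_univ x)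
  simpa only [mutantDist, Multiset.map_map, Function.comp_def, Multiset.insert_eq_cons,
    Multiset.map_cons, Multiset.map_singleton, nonagonDelta_zero, nonagonDelta_one] using hmap

lemma mutantDist_triangle (x y z : Fin 3 × Fin 3) :
    mutantDist x z ≤ mutantDist x y + mutantDist y z := by
  refine triangle_of_blocks Prod.fst one_le_nonagonDelta_two (fun x => ?_) (fun x y hxy hfst => ?_)
    (fun x y hfst => ?_) x y z
  · simp [mutantDist, mutantIndex, nonagonDelta_zero]
  · exact mutantDist_eq_one hxy hfst
  · have hk := Finset.mem_Icc.1 (mutantIndex_mem_Icc_of_fst_ne x y hfst)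
    rw [← nonagonDelta_four]
    exact ⟨nonagonDelta_strictMonoOn.monotoneOn (by simp) (Set.mem_Iic.2 hk.2) hk.1,
      nonagonDelta_strictMonoOn.monotoneOn (Set.mem_Iic.2 hk.2) (by simp) hk.2⟩

/-- The mutant of the regular nonagon: nine points `A_0,A_1,A_2,B_0,B_1,B_2,C_0,C_1,C_2`
(encoded as pairs `(letter, subscript) : Fin 3 × Fin 3`), with distance 1 inside each
letter triple, `d(A_i,B_i)=d(B_i,C_i)=d(C_i,A_i)=δ_2`, `d(A_i,B_{i+1})=d(B_i,C_{i+1})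
=d(C_i,A_{i+1})=δ_3`, `d(A_i,B_{i+2})=d(B_i,C_{i+2})=d(C_i,A_{i+2})=δ_4` (subscripts
mod 3).  This is a metric space, it is quasi-homogeneous of type
`[1,1,δ_2,δ_2,δ_3,δ_3,δ_4,δ_4]`, and it is not isometric to the vertex set of the
regular 9-gon with unit side length. -/
theorem mutant_nonagon :
    ∃ D : (Fin 3 × Fin 3) → (Fin 3 × Fin 3) → ℝ,
      (∀ x y : Fin 3 × Fin 3, D x y =
        if x.1 = y.1 then (if x.2 = y.2 then 0 else 1)
        else if y.1 - x.1 = (1 : Fin 3) then nonagonDelta (2 + ((y.2 - x.2 : Fin 3) : ℕ))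
        else nonagonDelta (2 + ((x.2 - y.2 : Fin 3) : ℕ))) ∧
      -- it is a metric space: symmetry, positivity and all triangle inequalities
      (∀ x y, D x y = D y x) ∧
      (∀ x y, x ≠ y → 0 < D x y) ∧
      (∀ x y z : Fin 3 × Fin 3, D x z ≤ D x y + D y z) ∧
      -- quasi-homogeneous of type [1,1,δ₂,δ₂,δ₃,δ₃,δ₄,δ₄]
      (∀ x : Fin 3 × Fin 3,
        ((Finset.univ : Finset (Fin 3 × Fin 3)).val.map fun y => D x y)
          = (0 ::ₘ 1 ::ₘ 1 ::ₘ nonagonDelta 2 ::ₘ nonagonDelta 2 ::ₘ nonagonDelta 3 ::ₘ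
              nonagonDelta 3 ::ₘ nonagonDelta 4 ::ₘ {nonagonDelta 4})) ∧
      -- not isometric to the vertex set of the regular 9-gon
      ¬ ∃ e : (Fin 3 × Fin 3) ≃ Fin 9, ∀ x y : Fin 3 × Fin 3,
          D x y = nonagonDelta (circAbs 9 ((e y : ℤ) - (e x : ℤ))).toNat := by
  refine ⟨mutantDist, mutantDist_eq, mutantDist_comm, fun x y => mutantDist_pos,
    mutantDist_triangle, map_mutantDist_univ, ?_⟩
  rintro ⟨e, he⟩
  have hunit : ∀ i j : Fin 3, i ≠ j →
      nonagonDelta (circAbs 9 ((e (0, j) : ℤ) - (e (0, i) : ℤ))).toNat = 1 := fun i j hij =>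
    (he (0, i) (0, j)).symm.trans (mutantDist_eq_one (by simpa using hij) rfl)
  exact nonagon_no_unit_triangle (hunit 0 1 (by decide)) (hunit 1 2 (by decide))
    (hunit 0 2 (by decide))
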